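/- Let F : ℝ^d × P₁(ℝ^d) → ℝ^m be locally differentiable at the empirical measure ψ^N = (1/N) ∑_{i=1}^N δ_{x_i} in the Wasserstein sense (i.e., there exists ∇_ψ F(x,ψ^N) ∈ L²_{ψ^N}(ℝ^d; ℝ^{m×d}) such that for every ν supported near ψ^N and every transport plan γ ∈ Γ(ψ^N,ν), F(x,ν) − F(x,ψ^N) = ∫ ∇_ψ F(x,ψ^N)(x₁)[x₂−x₁] dγ(x₁,x₂) + o(W_{2,γ}(ψ^N,ν))). Then the restriction F̃ : ℝ^d × (ℝ^d)^N → ℝ^m defined by F̃(x, (x₁,…,x_N)) = F(x, (1/N)∑δ_{x_i}) is differentiable at (x₁,…,x_N) and ∇_{x_i} F̃(x, x⃗) = (1/N) ∇_ψ F(x, ψ^N)(x_i) for every i = 1,…,N. -/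

import Mathlib

open MeasureTheory Filter Topology Set
open scoped ENNReal

/-!
Moving the atoms `xᵢ` of `ψᴺ` to `xᵢ + hᵢ` is realised by the coupling
`γ_h = (1/N) ∑ δ_{(xᵢ, xᵢ + hᵢ)}`. Against `γ_h` the first-order term of the Wasserstein
expansion is `(1/N) ∑ G(xᵢ)[hᵢ]`, and the transport cost `W_{2,γ_h} = ((1/N) ∑ |hᵢ|²)^{1/2}`
is positive for `h ≠ 0` and at most the sup norm `‖h‖`, so the `o(W_{2,γ_h})` remainder is
`o(‖h‖)`.
-/

noncomputable def empiricalMeasure {α : Type*} [MeasurableSpace α] {N : ℕ} (p : Fin N → α) :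
    Measure α :=
  (N : ℝ≥0∞)⁻¹ • ∑ i, Measure.dirac (p i)

section EmpiricalMeasure

variable {α : Type*} [MeasurableSpace α] {N : ℕ}

instance isProbabilityMeasure_empiricalMeasure [NeZero N] (p : Fin N → α) :
    IsProbabilityMeasure (empiricalMeasure p) := by
  constructor
  simp [empiricalMeasure, ENNReal.inv_mul_cancel (NeZero.ne (N : ℝ≥0∞))]

theorem map_empiricalMeasure {β : Type*} [MeasurableSpace β] {f : α → β} (hf : Measurable f)
    (p : Fin N → α) : (empiricalMeasure p).map f = empiricalMeasure (f ∘ p) := by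
  simp only [empiricalMeasure, Measure.map_smul, Measure.map_finset_sum' hf.aemeasurable,
    Measure.map_dirac' hf, Function.comp_apply]

theorem empiricalMeasure_apply_eq_zero [MeasurableSingletonClass α] {p : Fin N → α} {s : Set α}
    (hs : ∀ i, p i ∉ s) : empiricalMeasure p s = 0 := by
  simp [empiricalMeasure, Measure.dirac_apply, hs]

theorem integral_empiricalMeasure [MeasurableSingletonClass α] {E : Type*} [NormedAddCommGroup E]
    [NormedSpace ℝ E] [CompleteSpace E] (f : α → E) (p : Fin N → α) :
    ∫ a, f a ∂empiricalMeasure p = (N : ℝ)⁻¹ • ∑ i, f (p i) := by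
  rw [empiricalMeasure, integral_smul_measure,
    integral_finsetSum_measure fun i _ => integrable_dirac enorm_lt_top]
  simp [integral_dirac]

end EmpiricalMeasure

theorem inv_card_mul_sum_norm_sq_le_norm_sq {ι E : Type*} [Fintype ι] [SeminormedAddCommGroup E]
    (h : ι → E) : (Fintype.card ι : ℝ)⁻¹ * ∑ i, ‖h i‖ ^ 2 ≤ ‖h‖ ^ 2 := by
  rcases isEmpty_or_nonempty ι with _ | _
  · simp
  have hsum : ∑ i, ‖h i‖ ^ 2 ≤ Fintype.card ι * ‖h‖ ^ 2 := by
    simpa using Finset.sum_le_card_nsmul Finset.univ (fun i => ‖h i‖ ^ 2) (‖h‖ ^ 2)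
      fun i _ => pow_le_pow_left₀ (norm_nonneg _) (norm_le_pi_norm h i) 2
  exact (inv_mul_le_iff₀ (by positivity)).2 hsum

theorem Asymptotics.isLittleO_id_of_tendsto_div {e : ℝ → ℝ}
    (he : Tendsto (fun t => e t / t) (𝓝[>] 0) (𝓝 0)) : e =o[𝓝[>] 0] id :=
  (Asymptotics.isLittleO_iff_tendsto' <| eventually_nhdsWithin_of_forall
    fun _ ht h0 => absurd h0 (ne_of_gt ht)).2 he

theorem Asymptotics.isLittleO_id_of_norm_le_modulus {E F : Type*} [NormedAddCommGroup E]
    [NormedAddCommGroup F] {f : E → F} {e : ℝ → ℝ} {τ : E → ℝ}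
    (he : Tendsto (fun t => e t / t) (𝓝[>] 0) (𝓝 0)) (hf0 : f 0 = 0)
    (hτ : ∀ᶠ h in 𝓝[≠] 0, 0 < τ h ∧ τ h ≤ ‖h‖ ∧ ‖f h‖ ≤ e (τ h)) :
    f =o[𝓝 0] fun h => h := by
  have hτ_tendsto : Tendsto τ (𝓝[≠] 0) (𝓝[>] 0) := by
    refine tendsto_nhdsWithin_iff.2 ⟨?_, hτ.mono fun _ h => h.1⟩
    refine squeeze_zero' (hτ.mono fun _ h => h.1.le) (hτ.mono fun _ h => h.2.1) ?_
    exact tendsto_norm_zero.mono_left nhdsWithin_le_nhds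
  have hf_e : f =O[𝓝[≠] 0] (e ∘ τ) :=
    .of_bound 1 <| hτ.mono fun _ h => by simpa using h.2.2.trans (le_abs_self _)
  have hτ_id : τ =O[𝓝[≠] 0] id :=
    .of_bound 1 <| hτ.mono fun _ h => by simpa [abs_of_pos h.1] using h.2.1
  have hf : f =o[𝓝[≠] 0] id :=
    hf_e.trans_isLittleO <|
      ((isLittleO_id_of_tendsto_div he).comp_tendsto hτ_tendsto).trans_isBigO hτ_id
  rw [← nhdsNE_sup_pure]
  exact hf.sup (Asymptotics.isLittleO_pure.2 hf0)

theorem wasserstein_diff_implies_finite_dim_diff_general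
    (d m N : ℕ)
    (F : EuclideanSpace ℝ (Fin d) → Measure (EuclideanSpace ℝ (Fin d)) →
      EuclideanSpace ℝ (Fin m))
    (x : EuclideanSpace ℝ (Fin d)) (xv : Fin N → EuclideanSpace ℝ (Fin d))
    (G : EuclideanSpace ℝ (Fin d) →
      (EuclideanSpace ℝ (Fin d) →L[ℝ] EuclideanSpace ℝ (Fin m)))
    (hdiff : ∀ R > (0:ℝ), ∃ e : ℝ → ℝ,
      Tendsto (fun t => e t / t) (nhdsWithin 0 (Ioi 0)) (nhds 0) ∧
      ∀ ν : Measure (EuclideanSpace ℝ (Fin d)), IsProbabilityMeasure ν →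
        ν {y | ∃ i, dist y (xv i) ≤ R}ᶜ = 0 →
        ∀ γ : Measure (EuclideanSpace ℝ (Fin d) × EuclideanSpace ℝ (Fin d)),
          IsProbabilityMeasure γ →
          γ.map Prod.fst = ((N : ℝ≥0∞)⁻¹ • ∑ i : Fin N, Measure.dirac (xv i)) →
          γ.map Prod.snd = ν →
          ‖F x ν - F x ((N : ℝ≥0∞)⁻¹ • ∑ i : Fin N, Measure.dirac (xv i)) -
              ∫ p, G p.1 (p.2 - p.1) ∂γ‖ ≤
            e (Real.sqrt (∫ p, ‖p.1 - p.2‖ ^ 2 ∂γ))) :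
    HasFDerivAt
      (fun y : Fin N → EuclideanSpace ℝ (Fin d) =>
        F x ((N : ℝ≥0∞)⁻¹ • ∑ i : Fin N, Measure.dirac (y i)))
      ((N : ℝ)⁻¹ • ∑ i : Fin N,
        (G (xv i)).comp (ContinuousLinearMap.proj i)) xv := by
  obtain ⟨e, he, hbound⟩ := hdiff 1 one_pos
  rw [hasFDerivAt_iff_isLittleO_nhds_zero]
  refine Asymptotics.isLittleO_id_of_norm_le_modulus
    (τ := fun h => √((N : ℝ)⁻¹ * ∑ i, ‖h i‖ ^ 2)) he (by simp) ?_
  filter_upwards [self_mem_nhdsWithin,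
    nhdsWithin_le_nhds (Metric.closedBall_mem_nhds 0 one_pos)] with h hh0 hh1
  obtain ⟨i₀, hi₀⟩ : ∃ i, h i ≠ 0 := Function.ne_iff.1 hh0
  have : NeZero N := ⟨(Fin.pos i₀).ne'⟩
  refine ⟨?_, ?_, ?_⟩
  · exact Real.sqrt_pos.2 <| mul_pos (by simpa using Fin.pos i₀) <| Finset.sum_pos'
      (fun i _ => by positivity) ⟨i₀, Finset.mem_univ _, pow_pos (norm_pos_iff.2 hi₀) 2⟩
  · simpa [Real.sqrt_sq (norm_nonneg h)] using
      Real.sqrt_le_sqrt (inv_card_mul_sum_norm_sq_le_norm_sq h)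
  · have hsupp : empiricalMeasure (xv + h) {y | ∃ i, dist y (xv i) ≤ 1}ᶜ = 0 := by
      refine empiricalMeasure_apply_eq_zero fun i hi => hi ⟨i, ?_⟩
      simpa [dist_eq_norm] using (norm_le_pi_norm h i).trans (mem_closedBall_zero_iff.1 hh1)
    have hremainder := hbound _ inferInstance hsupp (empiricalMeasure fun i => (xv i, (xv + h) i))
      inferInstance (map_empiricalMeasure measurable_fst _) (map_empiricalMeasure measurable_snd _)
    rw [integral_empiricalMeasure, integral_empiricalMeasure] at hremainder
    simpa [empiricalMeasure] using hremainder

/-- If `F : ℝ^d × P₁(ℝ^d) → ℝ^m` is locally differentiable (in the Wasserstein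
sense) at the empirical measure `ψᴺ = (1/N) ∑ δ_{x_i}`, with differential
`G = ∇_ψ F(x, ψᴺ) ∈ L²_{ψᴺ}`, then the restriction
`F̃(x, x⃗) = F(x, (1/N) ∑ δ_{x_i})` is differentiable at `x⃗ = (x₁,…,x_N)` with
`∇_{x_i} F̃(x, x⃗) = (1/N) ∇_ψ F(x, ψᴺ)(x_i)`, i.e. its Fréchet derivative is
`v ↦ (1/N) ∑ᵢ G(xᵢ)[vᵢ]`. -/
theorem wasserstein_diff_implies_finite_dim_diff
    (d m N : ℕ) (hN : 0 < N)
    (F : EuclideanSpace ℝ (Fin d) → Measure (EuclideanSpace ℝ (Fin d)) →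
      EuclideanSpace ℝ (Fin m))
    (x : EuclideanSpace ℝ (Fin d)) (xv : Fin N → EuclideanSpace ℝ (Fin d))
    (G : EuclideanSpace ℝ (Fin d) →
      (EuclideanSpace ℝ (Fin d) →L[ℝ] EuclideanSpace ℝ (Fin m)))
    (hG : MemLp G 2 ((N : ℝ≥0∞)⁻¹ • ∑ i : Fin N, Measure.dirac (xv i)))
    (hdiff : ∀ R > (0:ℝ), ∃ e : ℝ → ℝ,
      Tendsto (fun t => e t / t) (nhdsWithin 0 (Ioi 0)) (nhds 0) ∧
      ∀ ν : Measure (EuclideanSpace ℝ (Fin d)), IsProbabilityMeasure ν →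
        ν {y | ∃ i, dist y (xv i) ≤ R}ᶜ = 0 →
        ∀ γ : Measure (EuclideanSpace ℝ (Fin d) × EuclideanSpace ℝ (Fin d)),
          IsProbabilityMeasure γ →
          γ.map Prod.fst = ((N : ℝ≥0∞)⁻¹ • ∑ i : Fin N, Measure.dirac (xv i)) →
          γ.map Prod.snd = ν →
          ‖F x ν - F x ((N : ℝ≥0∞)⁻¹ • ∑ i : Fin N, Measure.dirac (xv i)) -
              ∫ p, G p.1 (p.2 - p.1) ∂γ‖ ≤
            e (Real.sqrt (∫ p, ‖p.1 - p.2‖ ^ 2 ∂γ))) :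
    HasFDerivAt
      (fun y : Fin N → EuclideanSpace ℝ (Fin d) =>
        F x ((N : ℝ≥0∞)⁻¹ • ∑ i : Fin N, Measure.dirac (y i)))
      ((N : ℝ)⁻¹ • ∑ i : Fin N,
        (G (xv i)).comp (ContinuousLinearMap.proj i)) xv :=
  wasserstein_diff_implies_finite_dim_diff_general d m N F x xv G hdiff
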